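/- Let d ∈ ℕ, let L : ℝ^d → ℝ be differentiable, λ > 0, γ > 0. Let r : [0,1] → ℝ be concave with r(0) = 0 and r(1) = 1, and set R(m) = Σ_{i=1}^d r(m_i). Let m̄ ∈ {0,1}^d with support S of cardinality k, and suppose ‖∇L(m̄)‖_∞ ≤ λ. Let m* ∈ [0,1]^d satisfy L(m*) + λR(m*) ≤ L(m) + λR(m) for all m ∈ [0,1]^d, and assume L(m*) ≥ L(m̄) + ∇L(m̄)ᵀ(m* − m̄) + (γ/2)‖m* − m̄‖₂². Then, with h = m* − m̄ and φ(m*) = R(m*) − ‖m*‖₁, it holds that (γ/2)‖h‖₂² ≤ 2λ√k‖h‖₂ − λφ(m*). -/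

import Mathlib

/-!
Test the minimality of `m*` against `m̄` and compare with the strong-convexity lower bound; the
gradient term costs at most `λ‖h‖₁`. As `m̄` is binary and `m* ∈ [0,1]^d`, `R(m̄) = k` and
coordinatewise `m̄ᵢ + |hᵢ| - |m*ᵢ| = 2 m̄ᵢ |hᵢ|`, so `k + ‖h‖₁ - ‖m*‖₁ = 2‖h_S‖₁ ≤ 2√k ‖h‖₂`.
-/

open Finset

section

variable {ι : Type*} [Fintype ι]

theorem EuclideanSpace.sum_abs_le_sqrt_card_mul_norm (s : Finset ι) (x : EuclideanSpace ℝ ι) :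
    ∑ i ∈ s, |x i| ≤ √(#s : ℝ) * ‖x‖ := by
  have hsq : (∑ i ∈ s, |x i|) ^ 2 ≤ (√(#s : ℝ) * ‖x‖) ^ 2 := by
    rw [mul_pow, Real.sq_sqrt (Nat.cast_nonneg _), EuclideanSpace.real_norm_sq_eq]
    calc (∑ i ∈ s, |x i|) ^ 2 ≤ #s * ∑ i ∈ s, |x i| ^ 2 := sq_sum_le_card_mul_sum_sq
      _ ≤ #s * ∑ i, x i ^ 2 := by
        simp_rw [sq_abs]
        exact mul_le_mul_of_nonneg_left
          (sum_le_univ_sum_of_nonneg fun i => sq_nonneg _) (Nat.cast_nonneg _)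
  exact le_of_sq_le_sq hsq (by positivity)

theorem EuclideanSpace.neg_inner_le_mul_sum_abs {lam : ℝ} {g : EuclideanSpace ℝ ι}
    (hg : ∀ i, |g i| ≤ lam) (x : EuclideanSpace ℝ ι) :
    -inner ℝ g x ≤ lam * ∑ i, |x i| := by
  rw [PiLp.inner_apply, mul_sum, ← sum_neg_distrib]
  refine sum_le_sum fun i _ => ?_
  calc -inner ℝ (g i) (x i) ≤ |g i| * |x i| := by
        rw [Real.inner_apply, ← abs_mul]; exact neg_le_abs _
    _ ≤ lam * |x i| := mul_le_mul_of_nonneg_right (hg i) (abs_nonneg _)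

theorem sum_mul_eq_sum_filter_of_binary {b : ι → ℝ} (hb : ∀ i, b i = 0 ∨ b i = 1)
    (f : ι → ℝ) : ∑ i, b i * f i = ∑ i ∈ {i | b i = 1}, f i := by
  rw [sum_filter]
  refine sum_congr rfl fun i _ => ?_
  rcases hb i with e | e <;> simp [e]

theorem sum_eq_card_of_binary {b : ι → ℝ} (hb : ∀ i, b i = 0 ∨ b i = 1) :
    ∑ i, b i = #{i | b i = 1} := by
  simpa using sum_mul_eq_sum_filter_of_binary hb 1

theorem sum_comp_eq_sum_of_binary {r : ℝ → ℝ} (h0 : r 0 = 0) (h1 : r 1 = 1) {b : ι → ℝ}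
    (hb : ∀ i, b i = 0 ∨ b i = 1) : ∑ i, r (b i) = ∑ i, b i :=
  sum_congr rfl fun i _ => by rcases hb i with e | e <;> simp [e, h0, h1]

theorem add_abs_sub_sub_abs_of_binary {b x : ℝ} (hb : b = 0 ∨ b = 1)
    (hx : x ∈ Set.Icc (0 : ℝ) 1) :
    b + |x - b| - |x| = 2 * b * |x - b| := by
  obtain ⟨hx0, hx1⟩ := hx
  rcases hb with rfl | rfl
  · simp
  · rw [abs_of_nonpos (by linarith), abs_of_nonneg hx0]; ring

theorem card_add_sum_abs_sub_sub_sum_abs_of_binary {b x : ι → ℝ} (hb : ∀ i, b i = 0 ∨ b i = 1)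
    (hx : ∀ i, x i ∈ Set.Icc (0 : ℝ) 1) :
    #{i | b i = 1} + ∑ i, |x i - b i| - ∑ i, |x i| = 2 * ∑ i ∈ {i | b i = 1}, |x i - b i| := by
  rw [← sum_eq_card_of_binary hb, ← sum_mul_eq_sum_filter_of_binary hb, mul_sum,
    ← sum_add_distrib, ← sum_sub_distrib]
  exact sum_congr rfl fun i _ => by rw [add_abs_sub_sub_abs_of_binary (hb i) (hx i), mul_assoc]

end

theorem concave_central_inequality_general
    (d : ℕ) (L : EuclideanSpace ℝ (Fin d) → ℝ)
    (lam γ : ℝ) (hlam : 0 < lam)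
    (r : ℝ → ℝ)
    (h0 : r 0 = 0) (h1 : r 1 = 1)
    (mbar : EuclideanSpace ℝ (Fin d)) (hbin : ∀ i, mbar i = 0 ∨ mbar i = 1)
    (k : ℕ) (hk : (Finset.univ.filter fun i => mbar i = 1).card = k)
    (hgrad : ∀ i, |gradient L mbar i| ≤ lam)
    (mstar : EuclideanSpace ℝ (Fin d)) (hms : ∀ i, mstar i ∈ Set.Icc (0 : ℝ) 1)
    (hmin : ∀ m : EuclideanSpace ℝ (Fin d), (∀ i, m i ∈ Set.Icc (0 : ℝ) 1) →
      L mstar + lam * ∑ i, r (mstar i) ≤ L m + lam * ∑ i, r (m i))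
    (hsc : L mstar ≥ L mbar + (inner ℝ (gradient L mbar) (mstar - mbar) : ℝ)
      + γ / 2 * ‖mstar - mbar‖ ^ 2) :
    γ / 2 * ‖mstar - mbar‖ ^ 2 ≤
      2 * lam * Real.sqrt k * ‖mstar - mbar‖
      - lam * ((∑ i, r (mstar i)) - ∑ i, |mstar i|) := by
  subst hk
  have hRbar : ∑ i, r (mbar i) = #{i | mbar i = 1} := by
    rw [sum_comp_eq_sum_of_binary h0 h1 hbin, sum_eq_card_of_binary hbin]
  have hupper := hmin mbar fun i => by rcases hbin i with e | e <;> simp [e]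
  have hgradient := EuclideanSpace.neg_inner_le_mul_sum_abs hgrad (mstar - mbar)
  have hsupport := card_add_sum_abs_sub_sub_sum_abs_of_binary hbin hms
  have hCS := mul_le_mul_of_nonneg_left
    (EuclideanSpace.sum_abs_le_sqrt_card_mul_norm {i | mbar i = 1} (mstar - mbar)) hlam.le
  simp only [PiLp.sub_apply] at hgradient hCS
  linear_combination hsc + hupper + lam * hRbar + hgradient + lam * hsupport + 2 * hCS

/-- Quantitative content underlying Theorem 2 of the paper:
`(γ/2)‖h‖₂² ≤ 2λ√k‖h‖₂ − λφ(m*)` with `h = m* − m̄` and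
`φ(m*) = R(m*) − ‖m*‖₁`. -/
theorem concave_central_inequality
    (d : ℕ) (L : EuclideanSpace ℝ (Fin d) → ℝ) (hL : Differentiable ℝ L)
    (lam γ : ℝ) (hlam : 0 < lam) (hγ : 0 < γ)
    (r : ℝ → ℝ) (hconc : ConcaveOn ℝ (Set.Icc (0 : ℝ) 1) r)
    (h0 : r 0 = 0) (h1 : r 1 = 1)
    (mbar : EuclideanSpace ℝ (Fin d)) (hbin : ∀ i, mbar i = 0 ∨ mbar i = 1)
    (k : ℕ) (hk : (Finset.univ.filter fun i => mbar i = 1).card = k)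
    (hgrad : ∀ i, |gradient L mbar i| ≤ lam)
    (mstar : EuclideanSpace ℝ (Fin d)) (hms : ∀ i, mstar i ∈ Set.Icc (0 : ℝ) 1)
    (hmin : ∀ m : EuclideanSpace ℝ (Fin d), (∀ i, m i ∈ Set.Icc (0 : ℝ) 1) →
      L mstar + lam * ∑ i, r (mstar i) ≤ L m + lam * ∑ i, r (m i))
    (hsc : L mstar ≥ L mbar + (inner ℝ (gradient L mbar) (mstar - mbar) : ℝ)
      + γ / 2 * ‖mstar - mbar‖ ^ 2) :
    γ / 2 * ‖mstar - mbar‖ ^ 2 ≤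
      2 * lam * Real.sqrt k * ‖mstar - mbar‖
      - lam * ((∑ i, r (mstar i)) - ∑ i, |mstar i|) :=
  concave_central_inequality_general d L lam γ hlam r h0 h1 mbar hbin k hk hgrad mstar hms hmin hsc
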